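/- arXiv:1209.1156 — 2 statements merged into one kernel-verified Lean document; each statement's English description precedes it below -/
import Mathlib

section
/- Knight's identity: for every τ ∈ ℝ and all real numbers u and v, ρ_τ(u−v) − ρ_τ(u) = −v·(τ − I(u ≤ 0)) + ∫_0^v (I(u ≤ s) − I(u ≤ 0)) ds, where the integral is the (signed) interval integral over [0, v]. -/
/-- The check function of Koenker and Bassett: ρ_τ(u) = u(τ − I(u < 0)). -/
noncomputable def checkFun (τ u : ℝ) : ℝ := u * (τ - if u < 0 then 1 else 0)

/-!
Write ρ_τ(x) = τx + max(−x, 0). The map s ↦ max(s, u) has right derivative I(u ≤ s) at every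
point, so the fundamental theorem of calculus gives ∫_0^v I(u ≤ s) ds = max(v, u) − max(0, u),
and the identity reduces to max(v − u, 0) − max(−u, 0) = max(v, u) − max(0, u).
-/

open Set Filter intervalIntegral

theorem hasDerivWithinAt_max_const_Ioi (u x : ℝ) :
    HasDerivWithinAt (fun s => max s u) (if u ≤ x then 1 else 0) (Ioi x) x := by
  split_ifs with hux
  · exact (hasDerivWithinAt_id x _).congr (fun s hs => max_eq_left (hux.trans hs.out.le))
      (max_eq_left hux)
  · have hconst : (fun s => max s u) =ᶠ[nhds x] fun _ => u :=
      eventually_of_mem (Iic_mem_nhds (not_le.1 hux)) fun s hs => max_eq_right hs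
    exact ((hasDerivAt_const x u).congr_of_eventuallyEq hconst).hasDerivWithinAt

theorem monotone_ite_le_one_zero (u : ℝ) :
    Monotone (fun s : ℝ => if u ≤ s then (1 : ℝ) else 0) := by
  intro x y hxy
  dsimp only
  split_ifs with hx hy hy
  · rfl
  · exact absurd (hx.trans hxy) hy
  · exact zero_le_one
  · rfl

theorem integral_ite_le_one_zero (u a b : ℝ) :
    ∫ s in a..b, (if u ≤ s then (1 : ℝ) else 0) = max b u - max a u :=
  integral_eq_sub_of_hasDeriv_right (continuous_id.max continuous_const).continuousOn
    (fun x _ => hasDerivWithinAt_max_const_Ioi u x) (monotone_ite_le_one_zero u).intervalIntegrable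

theorem checkFun_eq_mul_add_max_neg (τ x : ℝ) : checkFun τ x = τ * x + max (-x) 0 := by
  unfold checkFun
  split_ifs with hx
  · rw [max_eq_left (by linarith)]; ring
  · rw [max_eq_right (by linarith)]; ring

/-- Knight's identity: for every τ ∈ ℝ and all real u, v,
ρ_τ(u−v) − ρ_τ(u) = −v·(τ − I(u ≤ 0)) + ∫_0^v (I(u ≤ s) − I(u ≤ 0)) ds. -/
theorem knight_identity (τ u v : ℝ) :
    checkFun τ (u - v) - checkFun τ u =
      -v * (τ - if u ≤ 0 then 1 else 0) +
        ∫ s in (0:ℝ)..v,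
          ((if u ≤ s then (1:ℝ) else 0) - (if u ≤ 0 then (1:ℝ) else 0)) := by
  rw [integral_sub (monotone_ite_le_one_zero u).intervalIntegrable intervalIntegrable_const,
    integral_ite_le_one_zero, integral_const, smul_eq_mul,
    checkFun_eq_mul_add_max_neg, checkFun_eq_mul_add_max_neg, neg_sub]
  have hvu : max (v - u) 0 = max v u - u := by rw [← max_sub_sub_right, sub_self]
  have hu : max (-u) 0 = max 0 u - u := by rw [← max_sub_sub_right, zero_sub, sub_self]
  rw [hvu, hu]
  ring
end

section
/- Argmin convergence for convex functions: let f_n : ℝ^d → ℝ be convex functions converging pointwise to a convex function f : ℝ^d → ℝ that has a unique global minimizer x₀. If for each n, x_n is a global minimizer of f_n, then x_n → x₀. -/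
/-!
If `x` lies at distance at least `ε` from `x₀` and `f x ≤ f x₀`, convexity puts a point of the
sphere of radius `ε` about `x₀` below level `f x₀`. So it suffices that, eventually, the `f n` are
uniformly above `f n x₀` on that sphere, on which `g` stays above some `a > g x₀`. Pointwise
convergence gives this at the finitely many points of a net of the sphere, and convexity spreads
it to the whole sphere, because pointwise convergence also bounds the `f n` above, uniformly on
bounded sets, by their values at the vertices of an enclosing polytope.
-/

open Filter Set Metric Bornology

variable {ι E : Type*} [NormedAddCommGroup E] [NormedSpace ℝ E] {l : Filter ι} {f : ι → E → ℝ}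

theorem ConvexOn.exists_mem_sphere_le_of_le {s : Set E} {g : E → ℝ} {x x₀ : E} {ε : ℝ}
    (hg : ConvexOn ℝ s g) (hx : x ∈ s) (hx₀ : x₀ ∈ s) (hgx : g x ≤ g x₀) (hε : 0 < ε)
    (hεx : ε ≤ dist x x₀) : ∃ y ∈ sphere x₀ ε, g y ≤ g x₀ := by
  have hdist : 0 < dist x x₀ := hε.trans_le hεx
  have hratio : ε / dist x x₀ ∈ Icc (0 : ℝ) 1 :=
    ⟨by positivity, (div_le_one hdist).2 hεx⟩
  refine ⟨AffineMap.lineMap x₀ x (ε / dist x x₀), ?_, ?_⟩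
  · rw [mem_sphere, dist_lineMap_left, Real.norm_of_nonneg hratio.1, dist_comm x₀,
      div_mul_cancel₀ _ hdist.ne']
  · exact (hg.le_max_of_mem_segment hx₀ hx (lineMap_mem_segment ℝ _ _ hratio)).trans
      (max_le le_rfl hgx)

theorem exists_eventually_forall_le_of_convexOn [FiniteDimensional ℝ E]
    (hf : ∀ i, ConvexOn ℝ univ (f i)) (hbdd : ∀ x, IsBoundedUnder (· ≤ ·) l fun i ↦ f i x)
    {s : Set E} (hs : IsBounded s) : ∃ M, ∀ᶠ i in l, ∀ y ∈ s, f i y ≤ M := by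
  obtain ⟨R, hR, hsR⟩ := hs.subset_closedBall_lt 0 0
  obtain ⟨u, hu, -⟩ :=
    (convex_closedBall (0 : E) R).exists_subset_interior_convexHull_finset_of_isCompact
      (isCompact_closedBall 0 R) univ_mem
  have hu₀ : u.Nonempty := Finset.coe_nonempty.1 <| convexHull_nonempty_iff.1
    ⟨0, interior_subset (hu (mem_closedBall_self hR.le))⟩
  obtain ⟨M, hM⟩ := isBoundedUnder_le_finset_sup' hu₀ fun p _ ↦ hbdd p
  refine ⟨M, (eventually_map.1 hM).mono fun i hi y hy ↦ ?_⟩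
  exact ((hf i).le_sup_of_mem_convexHull (subset_univ _) (interior_subset (hu (hsR hy)))).trans hi

theorem eventually_forall_lt_of_convexOn [FiniteDimensional ℝ E]
    (hf : ∀ i, ConvexOn ℝ univ (f i)) (hbdd : ∀ x, IsBoundedUnder (· ≤ ·) l fun i ↦ f i x)
    {K : Set E} (hK : IsCompact K) {a b : ℝ} (hlow : ∀ y ∈ K, ∀ᶠ i in l, a < f i y)
    (hba : b < a) : ∀ᶠ i in l, ∀ y ∈ K, b < f i y := by
  obtain ⟨M, hM⟩ :=
    exists_eventually_forall_le_of_convexOn hf hbdd (hK.isBounded.cthickening (δ := 1))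
  set t := (a - b) / (max M a - b)
  have hMb : 0 < max M a - b := by linarith [le_max_right M a]
  have ht0 : 0 < t := div_pos (by linarith) hMb
  have ht1 : t ≤ 1 := (div_le_one hMb).2 (by linarith [le_max_right M a])
  have htM : t * (max M a - b) = a - b := div_mul_cancel₀ _ hMb.ne'
  obtain ⟨F, hFK, hKF⟩ := hK.elim_nhds_subcover (fun c ↦ ball c t) fun c _ ↦ ball_mem_nhds c ht0
  filter_upwards [hM, (F.eventually_all).2 fun c hc ↦ hlow c (hFK c hc)] with i hMi hFi y hy
  obtain ⟨c, hcF, hyc⟩ : ∃ c ∈ F, y ∈ ball c t := by simpa using hKF hy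
  set w := y + t⁻¹ • (c - y)
  have hw : w ∈ cthickening 1 K := by
    refine mem_cthickening_of_dist_le w y 1 K hy ?_
    rw [dist_eq_norm, add_sub_cancel_left, norm_smul, Real.norm_of_nonneg (inv_pos.2 ht0).le,
      ← dist_eq_norm, inv_mul_le_one₀ ht0]
    exact (mem_ball'.1 hyc).le
  have hcw : (1 - t) • y + t • w = c := by
    simp only [w, smul_add, smul_smul, mul_inv_cancel₀ ht0.ne', one_smul, sub_smul]
    abel
  have hconv := (hf i).2 (mem_univ y) (mem_univ w) (sub_nonneg.2 ht1) ht0.le (by ring)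
  rw [hcw, smul_eq_mul, smul_eq_mul] at hconv
  -- if `f i y ≤ b`, then `a < f i c ≤ (1 - t) * b + t * max M a = a`
  by_contra! hyb
  have hy' : (1 - t) * f i y ≤ (1 - t) * b := mul_le_mul_of_nonneg_left hyb (sub_nonneg.2 ht1)
  have hw' : t * f i w ≤ t * max M a := mul_le_mul_of_nonneg_left
    ((hMi w hw).trans (le_max_left M a)) ht0.le
  linarith [hFi c hcF]

theorem convex_argmin_convergence_general (d : ℕ)
    (f : ℕ → (Fin d → ℝ) → ℝ) (g : (Fin d → ℝ) → ℝ)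
    (hconv : ∀ n, ConvexOn ℝ Set.univ (f n))
    (hgconv : ConvexOn ℝ Set.univ g)
    (hlim : ∀ x, Tendsto (fun n => f n x) atTop (nhds (g x)))
    (x₀ : Fin d → ℝ)
    (huniq : ∀ x, x ≠ x₀ → g x₀ < g x)
    (x : ℕ → (Fin d → ℝ)) (hxn : ∀ n, ∀ y, f n (x n) ≤ f n y) :
    Tendsto x atTop (nhds x₀) := by
  refine Metric.tendsto_nhds.2 fun ε hε ↦ ?_
  obtain ⟨a, hga, ha⟩ := (isCompact_sphere x₀ ε).exists_forall_le'
    ((hgconv.continuousOn isOpen_univ).mono (subset_univ _))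
    fun y hy ↦ huniq y (ne_of_mem_sphere hy hε.ne')
  obtain ⟨b, hgb, hba⟩ := exists_between hga
  obtain ⟨c, hbc, hca⟩ := exists_between hba
  have hsphere : ∀ᶠ n in atTop, ∀ y ∈ sphere x₀ ε, b < f n y :=
    eventually_forall_lt_of_convexOn hconv (fun y ↦ (hlim y).isBoundedUnder_le)
      (isCompact_sphere x₀ ε)
      (fun y hy ↦ (hlim y).eventually (lt_mem_nhds (hca.trans_le (ha y hy)))) hbc
  filter_upwards [hsphere, (hlim x₀).eventually (gt_mem_nhds hgb)] with n hn hn₀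
  by_contra! hfar
  obtain ⟨y, hy, hfy⟩ :=
    (hconv n).exists_mem_sphere_le_of_le trivial trivial (hxn n x₀) hε hfar
  linarith [hn y hy]

/-- Argmin convergence for convex functions: if convex f_n : ℝ^d → ℝ converge
pointwise to a convex f with a unique global minimizer x₀, and x_n minimizes f_n,
then x_n → x₀. -/
theorem convex_argmin_convergence (d : ℕ)
    (f : ℕ → (Fin d → ℝ) → ℝ) (g : (Fin d → ℝ) → ℝ)
    (hconv : ∀ n, ConvexOn ℝ Set.univ (f n))
    (hgconv : ConvexOn ℝ Set.univ g)
    (hlim : ∀ x, Tendsto (fun n => f n x) atTop (nhds (g x)))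
    (x₀ : Fin d → ℝ) (hmin : ∀ x, g x₀ ≤ g x)
    (huniq : ∀ x, x ≠ x₀ → g x₀ < g x)
    (x : ℕ → (Fin d → ℝ)) (hxn : ∀ n, ∀ y, f n (x n) ≤ f n y) :
    Tendsto x atTop (nhds x₀) :=
  convex_argmin_convergence_general d f g hconv hgconv hlim x₀ huniq x hxn
end
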